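/- Let F ⊆ {2,3,4,…} be a finite set of integers and let G be a completely metrizable topological group. If G has a dense-in-itself subgroup in which the order of every nonidentity element belongs to F, then there exists a perfect set P ⊆ G such that in the subgroup generated by P the order of every nonidentity element belongs to F. -/

import Mathlib

open Set Filter Cardinal FirstOrder

universe u v

/-- A topological space is completely metrizable if its topology is induced by a complete metric. -/
def CompletelyMetrizable (Y : Type*) [t : TopologicalSpace Y] : Prop :=
  ∃ m : MetricSpace Y, m.toUniformSpace.toTopologicalSpace = t ∧ @CompleteSpace Y m.toUniformSpace

/-- The weight of a topological space: the least cardinality of a topological basis. -/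
noncomputable def topWeight (X : Type u) [TopologicalSpace X] : Cardinal.{u} :=
  ⨅ B : { B : Set (Set X) // TopologicalSpace.IsTopologicalBasis B }, Cardinal.mk B.1

/-- A set is dense-in-itself if it is nonempty and has no isolated points
(in the subspace topology). -/
def DenseInItselfSet {X : Type*} [TopologicalSpace X] (S : Set X) : Prop :=
  S.Nonempty ∧ ∀ x ∈ S, AccPt x (𝓟 S)

/-- A set is perfect if it is nonempty, completely metrizable in the subspace topology,
and has no isolated points. -/
def IsPerfectSet {X : Type*} [TopologicalSpace X] (P : Set X) : Prop :=
  P.Nonempty ∧ CompletelyMetrizable P ∧ ∀ x ∈ P, AccPt x (𝓟 P)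

/-- The `γ`-th Cantor–Bendixson derivative of a set: iterate the operation of removing
isolated points, taking intersections at limit stages. -/
noncomputable def cbDeriv {X : Type u} [TopologicalSpace X] (A : Set X) (γ : Ordinal.{v}) :
    Set X :=
  Ordinal.limitRecOn γ A (fun _ ih => { x ∈ ih | AccPt x (𝓟 ih) })
    (fun o _ ih => ⋂ (o' : Ordinal.{v}) (h : o' < o), ih o' h)

/-!
The closure `K` of `H` is a perfect complete metric space, and `g ^ lcm F = 1` on `K`. For a
word `w` in `k` letters, the order of `w x` is locally constant on a dense open subset of `Kᵏ`,
and on the dense set `Hᵏ` it lies in `F ∪ {1}`; hence the tuples `x` for which `w x ≠ 1` has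
order outside `F` form a nowhere dense subset of `Kᵏ`. A Cantor scheme whose pieces, level by
level, are shrunk so that tuples taken from distinct pieces avoid more and more of these countably
many relations (Mycielski's argument) yields a Cantor set in `K` generating a subgroup in which
every nontrivial element is a value `w x` at an injective tuple, hence has order in `F`.
-/

open Set Filter Function Topology Metric PiNat CantorScheme

lemma Preperfect.perfectSpace_coe {α : Type*} [TopologicalSpace α] {C : Set α}
    (hC : Preperfect C) : PerfectSpace C := by
  refine ⟨preperfect_iff_nhds.2 fun x _ U hU => ?_⟩
  obtain ⟨V, hV, hVU⟩ := (mem_nhds_subtype C x U).1 hU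
  obtain ⟨y, ⟨hyV, hyC⟩, hyx⟩ := preperfect_iff_nhds.1 hC x x.2 V hV
  exact ⟨⟨y, hyC⟩, ⟨hVU hyV, mem_univ _⟩, fun h => hyx (congrArg Subtype.val h)⟩

lemma isPerfectSet_range {Y : Type*} [MetricSpace Y] [CompleteSpace Y] {φ : (ℕ → Bool) → Y}
    (hc : Continuous φ) (hi : Injective φ) : IsPerfectSet (range φ) := by
  refine ⟨range_nonempty φ, ⟨inferInstance, rfl, (isCompact_range hc).isClosed.completeSpace_coe⟩,
    ?_⟩
  rintro _ ⟨σ, rfl⟩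
  let σ' : ℕ → ℕ → Bool := fun n => update σ n (!σ n)
  have hσ' : Tendsto σ' atTop (𝓝 σ) := tendsto_pi_nhds.2 fun t => tendsto_const_nhds.congr' <|
    (eventually_gt_atTop t).mono fun n hn => (update_of_ne hn.ne _ _).symm
  refine accPt_iff_frequently.2 <| ((hc.tendsto σ).comp hσ').frequently <|
    Frequently.of_forall fun n => ⟨hi.ne fun h => ?_, mem_range_self _⟩
  simpa [σ'] using congrFun h n

lemma isNowhereDense_of_forall_exists_disjoint {X : Type*} [TopologicalSpace X] {s : Set X}
    (h : ∀ U, IsOpen U → U.Nonempty → ∃ V ⊆ U, IsOpen V ∧ V.Nonempty ∧ Disjoint V s) :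
    IsNowhereDense s := by
  by_contra hs
  obtain ⟨V, hVU, hV, ⟨x, hxV⟩, hVs⟩ := h _ isOpen_interior (nonempty_iff_ne_empty.2 hs)
  exact (hVs.closure_right hV).ne_of_mem hxV (interior_subset (hVU hxV)) rfl

lemma IsNowhereDense.exists_pi_subset_disjoint {ι X : Type*} [TopologicalSpace X] [Finite ι]
    {R : Set (ι → X)} (hR : IsNowhereDense R) {U : ι → Set X} (hU : ∀ j, IsOpen (U j))
    (hne : ∀ j, (U j).Nonempty) :
    ∃ V ≤ U, (∀ j, IsOpen (V j) ∧ (V j).Nonempty) ∧ Disjoint (univ.pi V) R := by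
  have hUo : IsOpen (univ.pi U) := isOpen_set_pi finite_univ fun j _ => hU j
  obtain ⟨x, hxU, hxR⟩ : (univ.pi U \ closure R).Nonempty := by
    rw [nonempty_iff_ne_empty, Ne, sdiff_eq_empty]
    intro hsub
    obtain ⟨x, hx⟩ := univ_pi_nonempty_iff.2 hne
    exact (hR ▸ interior_maximal hsub hUo hx : x ∈ (∅ : Set (ι → X)))
  obtain ⟨u, hu, hus⟩ := isOpen_pi_iff'.1 (hUo.sdiff isClosed_closure) x ⟨hxU, hxR⟩
  refine ⟨fun j => u j ∩ U j, fun j => inter_subset_right,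
    fun j => ⟨(hu j).1.inter (hU j), x j, (hu j).2, hxU j trivial⟩, ?_⟩
  exact disjoint_left.2 fun y hy hyR => (hus fun j _ => (hy j trivial).1).2 (subset_closure hyR)

section Mycielski

variable {X : Type*} [MetricSpace X]

lemma exists_disjoint_pair_subset [PerfectSpace X] {U : Set X} (hU : IsOpen U) (hne : U.Nonempty)
    {ε : ℝ} (hε : 0 < ε) :
    ∃ V : Bool → Set X, (∀ b, IsOpen (V b) ∧ (V b).Nonempty ∧ closure (V b) ⊆ U ∧
      ediam (V b) ≤ ENNReal.ofReal ε) ∧ Disjoint (V false) (V true) := by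
  obtain ⟨x, hx⟩ := hne
  obtain ⟨y, ⟨hyU, -⟩, hyx⟩ := preperfect_iff_nhds.1 hU.preperfect x hx U (hU.mem_nhds hx)
  obtain ⟨rx, hrx, hrxU⟩ := nhds_basis_closedBall.mem_iff.1 (hU.mem_nhds hx)
  obtain ⟨ry, hry, hryU⟩ := nhds_basis_closedBall.mem_iff.1 (hU.mem_nhds hyU)
  have hxy : 0 < dist x y := dist_pos.2 hyx.symm
  set r := min (min rx ry) (min (dist x y / 2) (ε / 2))
  have hr : 0 < r := by positivity
  have hrε : r ≤ ε / 2 := (min_le_right _ _).trans (min_le_right _ _)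
  have hball : ∀ z : X, ediam (ball z r) ≤ ENNReal.ofReal ε := fun z =>
    ediam_le_of_forall_dist_le (s := ball z r) fun p hp q hq => by
      linarith [dist_triangle_right p q z, mem_ball.1 hp, mem_ball.1 hq]
  refine ⟨fun b => ball (cond b y x) r, fun b => ⟨isOpen_ball, nonempty_ball.2 hr,
    closure_ball_subset_closedBall.trans ?_, hball _⟩, ball_disjoint_ball ?_⟩
  · cases b
    · exact (closedBall_subset_closedBall (by simp [r])).trans hrxU
    · exact (closedBall_subset_closedBall (by simp [r])).trans hryU
  · have : r ≤ dist x y / 2 := (min_le_right _ _).trans (min_le_left _ _)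
    simp only [cond_false, cond_true]
    linarith

variable {ι : Type*} {κ : ι → Type*} [∀ i, Finite (κ i)] {R : ∀ i, Set (κ i → X)}

lemma exists_le_disjoint_pi_comp {β : Type*} {i : ι} (hR : IsNowhereDense (R i)) {τ : κ i → β}
    (hτ : Injective τ) (A : β → Set X) (hA : ∀ b, IsOpen (A b) ∧ (A b).Nonempty) :
    ∃ A' ≤ A, (∀ b, IsOpen (A' b) ∧ (A' b).Nonempty) ∧ Disjoint (univ.pi (A' ∘ τ)) (R i) := by
  obtain ⟨V, hVA, hV, hVR⟩ :=
    hR.exists_pi_subset_disjoint (U := A ∘ τ) (fun j => (hA _).1) (fun j => (hA _).2)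
  refine ⟨extend τ V A, fun b => ?_, fun b => ?_, by rwa [extend_comp hτ]⟩
  · by_cases hb : ∃ j, τ j = b
    · obtain ⟨j, rfl⟩ := hb
      rw [hτ.extend_apply]
      exact hVA j
    · rw [extend_apply' _ _ _ hb]
  · by_cases hb : ∃ j, τ j = b
    · obtain ⟨j, rfl⟩ := hb
      rw [hτ.extend_apply]
      exact hV j
    · rw [extend_apply' _ _ _ hb]
      exact hA b

lemma exists_le_disjoint_pi (hR : ∀ i, IsNowhereDense (R i)) {β : Type*}
    {T : Set (Σ i, κ i → β)} (hT : T.Finite) (A : β → Set X)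
    (hA : ∀ b, IsOpen (A b) ∧ (A b).Nonempty) :
    ∃ A' ≤ A, (∀ b, IsOpen (A' b) ∧ (A' b).Nonempty) ∧
      ∀ t ∈ T, Injective t.2 → Disjoint (univ.pi (A' ∘ t.2)) (R t.1) := by
  induction T, hT using Set.Finite.induction_on with
  | empty => exact ⟨A, le_rfl, hA, by simp⟩
  | @insert t T _ _ ih =>
    obtain ⟨A₁, hA₁A, hA₁, hA₁T⟩ := ih
    by_cases ht : Injective t.2
    · obtain ⟨A₂, hA₂A₁, hA₂, hA₂t⟩ := exists_le_disjoint_pi_comp (hR t.1) ht A₁ hA₁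
      refine ⟨A₂, hA₂A₁.trans hA₁A, hA₂, ?_⟩
      rintro s (rfl | hs) hinj
      · exact hA₂t
      · exact (hA₁T s hs hinj).mono_left (pi_mono fun j _ => hA₂A₁ _)
    · refine ⟨A₁, hA₁A, hA₁, ?_⟩
      rintro s (rfl | hs) hinj
      exacts [absurd hinj ht, hA₁T s hs hinj]

lemma exists_next_level [PerfectSpace X] (hR : ∀ i, IsNowhereDense (R i)) {c : ι → ℕ}
    (hc : Injective c) (m : ℕ) (A : List Bool → Set X)
    (hA : ∀ s, IsOpen (A s) ∧ (A s).Nonempty) :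
    ∃ A' : List Bool → Set X, (∀ s, IsOpen (A' s) ∧ (A' s).Nonempty) ∧
      (∀ b s, closure (A' (b :: s)) ⊆ A s ∧ ediam (A' (b :: s)) ≤ ENNReal.ofReal ((1 / 2) ^ m)) ∧
      (∀ s, Disjoint (A' (false :: s)) (A' (true :: s))) ∧
      ∀ i, c i ≤ m → ∀ τ : κ i → List Bool, Injective τ → (∀ j, (τ j).length = m + 1) →
        Disjoint (univ.pi (A' ∘ τ)) (R i) := by
  choose V hV hVdisj using fun s =>
    exists_disjoint_pair_subset (hA s).1 (hA s).2 (ε := (1 / 2) ^ m) (by positivity)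
  let B : List Bool → Set X
    | [] => A []
    | b :: s => V s b
  have hB : ∀ s, IsOpen (B s) ∧ (B s).Nonempty := by
    rintro (_ | ⟨b, s⟩)
    exacts [hA [], ⟨(hV s b).1, (hV s b).2.1⟩]
  let T : Set (Σ i, κ i → List Bool) :=
    ⋃ i ∈ c ⁻¹' Iic m, Sigma.mk i '' univ.pi fun _ => {s | s.length = m + 1}
  have hT : T.Finite := ((finite_Iic m).preimage hc.injOn).biUnion fun i _ =>
    (Finite.pi fun _ => List.finite_length_eq Bool (m + 1)).image _
  obtain ⟨A', hA'B, hA', hA'T⟩ := exists_le_disjoint_pi hR hT B hB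
  refine ⟨A', hA', fun b s => ⟨(closure_mono (hA'B _)).trans (hV s b).2.2.1,
    (ediam_mono (hA'B _)).trans (hV s b).2.2.2⟩, fun s => (hVdisj s).mono (hA'B _) (hA'B _),
    fun i hi τ hτ hlen => hA'T ⟨i, τ⟩ (mem_biUnion hi (mem_image_of_mem _ fun j _ => hlen j)) hτ⟩

lemma eventually_injective_res {α β : Type*} [Finite α] {σ : α → ℕ → β} (hσ : Injective σ) :
    ∀ᶠ m in atTop, Injective fun j => res (σ j) m := by
  have hsep : ∀ j j', ∀ᶠ m in atTop, j ≠ j' → res (σ j) m ≠ res (σ j') m := by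
    intro j j'
    by_cases hjj' : j = j'
    · simp [hjj']
    obtain ⟨t, ht⟩ := ne_iff.1 (hσ.ne hjj')
    filter_upwards [eventually_gt_atTop t] with m hm _ h
    exact ht (res_eq_res.1 h hm)
  filter_upwards [eventually_all.2 fun j => eventually_all.2 (hsep j)] with m hm j j' h
  by_contra hne
  exact hm j j' hne h

lemma exists_levels [PerfectSpace X] [Nonempty X] (hR : ∀ i, IsNowhereDense (R i)) {c : ι → ℕ}
    (hc : Injective c) :
    ∃ F : ℕ → List Bool → Set X, (∀ m s, (F m s).Nonempty) ∧
      (∀ m b s, closure (F (m + 1) (b :: s)) ⊆ F m s ∧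
        ediam (F (m + 1) (b :: s)) ≤ ENNReal.ofReal ((1 / 2) ^ m)) ∧
      (∀ m s, Disjoint (F (m + 1) (false :: s)) (F (m + 1) (true :: s))) ∧
      ∀ m i, c i ≤ m → ∀ τ : κ i → List Bool, Injective τ → (∀ j, (τ j).length = m + 1) →
        Disjoint (univ.pi (F (m + 1) ∘ τ)) (R i) := by
  choose! next hnext hnext_sub hnext_disj hnext_R using exists_next_level hR hc
  let F : ℕ → List Bool → Set X := fun m => Nat.rec (fun _ => univ) next m
  have hF : ∀ m s, IsOpen (F m s) ∧ (F m s).Nonempty := by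
    intro m
    induction m with
    | zero => exact fun _ => ⟨isOpen_univ, univ_nonempty⟩
    | succ m ih => exact hnext m _ ih
  exact ⟨F, fun m s => (hF m s).2, fun m => hnext_sub m _ (hF m),
    fun m => hnext_disj m _ (hF m), fun m => hnext_R m _ (hF m)⟩

theorem exists_nat_bool_injection_avoiding [CompleteSpace X] [PerfectSpace X] [Nonempty X]
    [Countable ι] (hR : ∀ i, IsNowhereDense (R i)) :
    ∃ f : (ℕ → Bool) → X, Continuous f ∧ Injective f ∧
      ∀ i (x : κ i → X), Injective x → (∀ j, x j ∈ range f) → x ∉ R i := by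
  -- Relation `i` is imposed on the pieces of every level beyond `c i`.
  obtain ⟨c, hc⟩ := exists_injective_nat ι
  obtain ⟨F, hFne, hFsub, hFdisj, hFR⟩ := exists_levels hR hc
  let S : List Bool → Set X := fun s => F s.length s
  have hS : ∀ m s, s.length = m + 1 → S s = F (m + 1) s := by
    intro m s hs
    change F s.length s = _
    rw [hs]
  have hanti : ClosureAntitone S := fun s b => by
    rw [hS s.length _ rfl]
    exact (hFsub _ b s).1
  have hdisj : CantorScheme.Disjoint S := by
    rintro s (_ | _) (_ | _) hab
    · exact absurd rfl hab
    · rw [hS s.length _ rfl, hS s.length _ rfl]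
      exact hFdisj _ s
    · rw [hS s.length _ rfl, hS s.length _ rfl]
      exact (hFdisj _ s).symm
    · exact absurd rfl hab
  have hdiam : VanishingDiam S := by
    intro σ
    rw [← tendsto_add_atTop_iff_nat 1]
    refine tendsto_of_tendsto_of_tendsto_of_le_of_le tendsto_const_nhds
      (ENNReal.ofReal_zero ▸ ENNReal.tendsto_ofReal
        (tendsto_pow_atTop_nhds_zero_of_lt_one (r := (1 / 2 : ℝ)) (by norm_num) (by norm_num)))
      (fun _ => bot_le) fun n => ?_
    rw [hS n _ (res_length _ _), res_succ]
    exact (hFsub n _ _).2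
  have hdom := hanti.map_of_vanishingDiam hdiam fun s => hFne _ s
  let f : (ℕ → Bool) → X := fun σ => (inducedMap S).2 ⟨σ, hdom ▸ mem_univ σ⟩
  refine ⟨f, hdiam.map_continuous.comp (continuous_id.subtype_mk _),
    fun σ σ' h => congrArg Subtype.val (hdisj.map_injective h), fun i x hx hxf hxR => ?_⟩
  choose σ hσ using hxf
  have hσx : f ∘ σ = x := funext hσ
  obtain ⟨m, hcm, hm⟩ := ((eventually_ge_atTop (c i)).and
    ((tendsto_add_atTop_nat 1).eventually (eventually_injective_res (hσx ▸ hx).of_comp))).exists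
  refine (hFR m i hcm _ hm fun j => res_length _ _).ne_of_mem
    (fun j _ => ?_) hxR rfl
  rw [← hσ j, comp_apply, ← hS m _ (res_length _ _)]
  exact map_mem (A := S) ⟨σ j, _⟩ (m + 1)

end Mycielski

section Words

variable {G : Type*} [Group G]

lemma Subgroup.exists_finset_of_mem_closure {s : Set G} {g : G} (hg : g ∈ Subgroup.closure s) :
    ∃ t : Finset G, ↑t ⊆ s ∧ g ∈ Subgroup.closure (t : Set G) := by
  classical
  induction hg using Subgroup.closure_induction with
  | mem x hx => exact ⟨{x}, by simpa using hx, Subgroup.subset_closure (by simp)⟩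
  | one => exact ⟨∅, by simp, one_mem _⟩
  | mul x y _ _ hx hy =>
    obtain ⟨t, hts, hxt⟩ := hx
    obtain ⟨t', hts', hyt'⟩ := hy
    refine ⟨t ∪ t', by simp [hts, hts'], mul_mem ?_ ?_⟩
    exacts [Subgroup.closure_mono (by simp) hxt, Subgroup.closure_mono (by simp) hyt']
  | inv x _ hx =>
    obtain ⟨t, hts, hxt⟩ := hx
    exact ⟨t, hts, inv_mem hxt⟩

lemma exists_injective_lift_eq_of_mem_closure {s : Set G} {g : G}
    (hg : g ∈ Subgroup.closure s) :
    ∃ (k : ℕ) (y : Fin k → G) (w : FreeGroup (Fin k)),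
      Injective y ∧ (∀ j, y j ∈ s) ∧ FreeGroup.lift y w = g := by
  obtain ⟨t, hts, hgt⟩ := Subgroup.exists_finset_of_mem_closure hg
  let y : Fin t.card → G := fun j => t.equivFin.symm j
  have hy : range y = t :=
    (t.equivFin.symm.surjective.range_comp ((↑) : t → G)).trans Subtype.range_coe
  rw [← hy, ← FreeGroup.range_lift_eq_closure] at hgt
  obtain ⟨w, rfl⟩ := hgt
  exact ⟨t.card, y, w, Subtype.val_injective.comp t.equivFin.symm.injective,
    fun j => hts (t.equivFin.symm j).2, rfl⟩

variable [TopologicalSpace G] [IsTopologicalGroup G]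

lemma continuous_freeGroup_lift_apply {ι : Type*} (w : FreeGroup ι) :
    Continuous fun x : ι → G => FreeGroup.lift x w := by
  induction w using FreeGroup.induction_on with
  | C1 => simpa using continuous_const
  | of i => simpa using continuous_apply i
  | inv_of i hi =>
    simp only [map_inv]
    exact hi.inv
  | mul v w hv hw =>
    simp only [map_mul]
    exact hv.mul hw

lemma pow_lcm_eq_one_of_mem_closure [T1Space G] {H : Subgroup G} {F : Finset ℕ}
    (hHF : ∀ g ∈ H, g ≠ 1 → orderOf g ∈ F) {g : G} (hg : g ∈ closure (H : Set G)) :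
    g ^ F.lcm id = 1 := by
  refine closure_minimal (fun h hh => ?_) (isClosed_singleton.preimage (continuous_pow _)) hg
  by_cases h1 : h = 1
  · simp [h1]
  · exact orderOf_dvd_iff_pow_eq_one.1 (Finset.dvd_lcm (hHF h hh h1))

end Words

section OrderOf

variable {Y M : Type*} [TopologicalSpace Y] [Monoid M] [TopologicalSpace M] [ContinuousMul M]
  [T1Space M] {f : Y → M} {N : ℕ}

lemma exists_isOpen_subset_orderOf_eq (hf : Continuous f) (hN : 0 < N) (hfN : ∀ y, f y ^ N = 1)
    {U : Set Y} (hU : IsOpen U) (hne : U.Nonempty) :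
    ∃ V ⊆ U, IsOpen V ∧ V.Nonempty ∧ ∃ d, ∀ y ∈ V, orderOf (f y) = d := by
  -- Near a point of maximal order on `U` the order cannot drop, as `f y ^ e ≠ 1` is open.
  have hbdd : BddAbove ((fun y => orderOf (f y)) '' U) :=
    ⟨N, forall_mem_image.2 fun y _ => orderOf_le_of_pow_eq_one hN (hfN y)⟩
  obtain ⟨y₀, hy₀U, hy₀⟩ := Nat.sSup_mem (hne.image _) hbdd
  refine ⟨U ∩ ⋂ e ∈ Finset.Ioo 0 (orderOf (f y₀)), {y | f y ^ e ≠ 1}, inter_subset_left,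
    hU.inter (isOpen_biInter_finset fun e _ => isOpen_compl_singleton.preimage (hf.pow e)),
    ⟨y₀, hy₀U, mem_iInter₂.2 fun e he =>
      pow_ne_one_of_lt_orderOf (Finset.mem_Ioo.1 he).1.ne' (Finset.mem_Ioo.1 he).2⟩,
    _, fun y ⟨hyU, hy⟩ => le_antisymm (hy₀ ▸ le_csSup hbdd (mem_image_of_mem _ hyU)) ?_⟩
  by_contra! hlt
  have hpos : 0 < orderOf (f y) := (isOfFinOrder_iff_pow_eq_one.2 ⟨N, hN, hfN y⟩).orderOf_pos
  exact mem_iInter₂.1 hy _ (Finset.mem_Ioo.2 ⟨hpos, hlt⟩) (pow_orderOf_eq_one _)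

lemma isNowhereDense_orderOf_notMem (hf : Continuous f) (hN : 0 < N) (hfN : ∀ y, f y ^ N = 1)
    {D : Set Y} (hD : Dense D) {F : Set ℕ} (hDF : ∀ y ∈ D, f y ≠ 1 → orderOf (f y) ∈ F) :
    IsNowhereDense {y | f y ≠ 1 ∧ orderOf (f y) ∉ F} := by
  refine isNowhereDense_of_forall_exists_disjoint fun U hU hne => ?_
  obtain ⟨V, hVU, hV, hVne, d, hd⟩ := exists_isOpen_subset_orderOf_eq hf hN hfN hU hne
  obtain ⟨z, hzV, hzD⟩ := hD.inter_open_nonempty V hV hVne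
  refine ⟨V, hVU, hV, hVne, disjoint_left.2 fun y hyV ⟨hy1, hyF⟩ => ?_⟩
  have hz1 : f z ≠ 1 := fun h =>
    hy1 (orderOf_eq_one_iff.1 (by rw [hd y hyV, ← hd z hzV, h, orderOf_one]))
  exact hyF (hd y hyV ▸ hd z hzV ▸ hDF z hzD hz1)

end OrderOf

lemma isNowhereDense_lift_orderOf_notMem {G : Type*} [Group G] [TopologicalSpace G]
    [IsTopologicalGroup G] [T1Space G] {H : Subgroup G} {F : Finset ℕ} (hF : 0 ∉ F)
    (hHF : ∀ g ∈ H, g ≠ 1 → orderOf g ∈ F) {κ : Type*} (w : FreeGroup κ) :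
    IsNowhereDense {x : κ → closure (H : Set G) |
      FreeGroup.lift (fun j => (x j : G)) w ≠ 1 ∧
        orderOf (FreeGroup.lift (fun j => (x j : G)) w) ∉ F} := by
  have hN : 0 < F.lcm id :=
    Nat.pos_of_ne_zero fun h => hF (by simpa using Finset.lcm_eq_zero_iff.1 h)
  have hmem : ∀ x : κ → closure (H : Set G), (∀ j, (x j : G) ∈ H.topologicalClosure) →
      FreeGroup.lift (fun j => (x j : G)) w ∈ H.topologicalClosure := fun x hx =>
    FreeGroup.range_lift_le (by rintro _ ⟨j, rfl⟩; exact hx j) ⟨w, rfl⟩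
  have hdense : Dense ((↑) ⁻¹' (H : Set G) : Set (closure (H : Set G))) := by
    rw [Subtype.dense_iff, Subtype.image_preimage_coe, inter_eq_right.2 subset_closure]
  refine isNowhereDense_orderOf_notMem (F := (F : Set ℕ))
    ((continuous_freeGroup_lift_apply w).comp (by fun_prop)) hN
    (fun x => pow_lcm_eq_one_of_mem_closure hHF (hmem x fun j => (x j).2))
    (dense_pi univ fun _ _ => hdense) fun x hx => hHF _ ?_
  exact FreeGroup.range_lift_le (s := H) (by rintro _ ⟨j, rfl⟩; exact hx j trivial) ⟨w, rfl⟩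

theorem statement16 (F : Finset ℕ) (hF : ∀ k ∈ F, 2 ≤ k)
    {G : Type u} [Group G] [TopologicalSpace G] [IsTopologicalGroup G]
    (hG : CompletelyMetrizable G)
    (h : ∃ H : Subgroup G, DenseInItselfSet (H : Set G) ∧
      ∀ g ∈ H, g ≠ 1 → orderOf g ∈ F) :
    ∃ P : Set G, IsPerfectSet P ∧ ∀ g ∈ Subgroup.closure P, g ≠ 1 → orderOf g ∈ F := by
  obtain ⟨m, rfl, hcomplete⟩ := hG
  let : MetricSpace G := m
  obtain ⟨H, ⟨-, hHacc⟩, hHF⟩ := h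
  let X := closure (H : Set G)
  have : CompleteSpace X := isClosed_closure.completeSpace_coe
  have : PerfectSpace X := (Preperfect.perfect_closure hHacc).acc.perfectSpace_coe
  have : Nonempty X := ⟨⟨1, subset_closure H.one_mem⟩⟩
  obtain ⟨f, hfc, hfi, hfR⟩ := exists_nat_bool_injection_avoiding
    (κ := fun i : Σ k, FreeGroup (Fin k) => Fin i.1)
    fun i => isNowhereDense_lift_orderOf_notMem (fun h0 => by simpa using hF 0 h0) hHF i.2
  refine ⟨range (Subtype.val ∘ f), isPerfectSet_range (continuous_subtype_val.comp hfc)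
    (Subtype.val_injective.comp hfi), fun g hg hg1 => by_contra fun hgF => ?_⟩
  obtain ⟨k, y, w, hy, hyf, rfl⟩ := exists_injective_lift_eq_of_mem_closure hg
  choose σ hσ using hyf
  obtain rfl : Subtype.val ∘ f ∘ σ = y := funext hσ
  exact hfR ⟨k, w⟩ (f ∘ σ) hy.of_comp (fun j => mem_range_self _) ⟨hg1, hgF⟩
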